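/- For all θ, φ ∈ [0,π] and all u, v ∈ [0,1], (2/π²)·[θφ·(1−u) + (π−θ)(π−φ)·(1−v)] ≤ F_{θ,φ}(u,v) − F_{θ,φ}(1,1) ≤ (1/2)·[θφ·(1−u) + (π−θ)(π−φ)·(1−v)]. -/

import Mathlib

/-!
Write `a = sin (θ/2) sin (φ/2)` and `b = cos (θ/2) cos (φ/2)`, so that
`F(u,v) = arccos (u a + v b)²` and `a + b = cos ((θ - φ)/2)`, whence `F(1,1) = ((θ - φ)/2)²`.

Lower bound: since `sin x ≤ x`, `cos s - cos t ≤ (t² - s²)/2` for `0 ≤ s ≤ t`; with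
`s = arccos (a + b)` and `t = arccos (u a + v b)` this gives
`F(u,v) - F(1,1) ≥ 2 (a (1 - u) + b (1 - v))`, and Jordan's inequality `sin x ≥ 2x/π` gives
`a ≥ θφ/π²` and `b ≥ (π - θ)(π - φ)/π²`.

Upper bound: `arccos²` is convex on `[-1, 1]` (at `y = arccos x` its derivative is
`-2y / sin y`, and `y / sin y` increases), so `F(u,v)` is at most the bilinear interpolation of
its values at the four corners `u, v ∈ {0, 1}`. Those are controlled by the spherical
Pythagorean inequality `arccos (cos s cos t)² ≤ s² + t²`, a midpoint-convexity statement for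
`z ↦ cos √z`.
-/

open Real Set

/-- The function `F_{θ,φ}(u,v)`. -/
noncomputable def Ffun (θ φ u v : ℝ) : ℝ :=
  (Real.arccos (u * Real.sin (θ/2) * Real.sin (φ/2) + v * Real.cos (θ/2) * Real.cos (φ/2))) ^ 2

theorem antitoneOn_sin_div_self : AntitoneOn (fun x => sin x / x) (Ioc 0 π) := by
  intro x hx y hy hxy
  have h := strictConcaveOn_sin_Icc.concaveOn.neg.secant_mono (a := 0)
    ⟨le_rfl, pi_pos.le⟩ (Ioc_subset_Icc_self hx) (Ioc_subset_Icc_self hy) hx.1.ne' hy.1.ne' hxy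
  simp only [Pi.neg_apply, sin_zero, neg_zero, sub_zero, neg_div] at h
  exact neg_le_neg_iff.1 h

theorem hasDerivAt_arccos_sq {x : ℝ} (hx : x ∈ Ioo (-1) 1) :
    HasDerivAt (fun x => arccos x ^ 2) (-2 * (arccos x / sin (arccos x))) x := by
  refine ((hasDerivAt_arccos hx.1.ne' hx.2.ne).pow 2).congr_deriv ?_
  rw [sin_arccos]
  ring

theorem hasDerivAt_cos_sqrt {z : ℝ} (hz : 0 < z) :
    HasDerivAt (fun z => cos √z) (-(sin √z / √z) / 2) z := by
  refine ((hasDerivAt_cos √z).comp z (hasDerivAt_sqrt hz.ne')).congr_deriv ?_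
  ring

theorem convexOn_cos_sqrt : ConvexOn ℝ (Icc 0 (π ^ 2)) (fun z => cos √z) := by
  apply MonotoneOn.convexOn_of_deriv (convex_Icc _ _) (by fun_prop)
  · rw [interior_Icc]
    exact fun z hz => (hasDerivAt_cos_sqrt hz.1).differentiableAt.differentiableWithinAt
  rw [interior_Icc]
  intro z hz w hw hzw
  rw [(hasDerivAt_cos_sqrt hz.1).deriv, (hasDerivAt_cos_sqrt hw.1).deriv]
  have hsqrt {y : ℝ} (hy : y ∈ Ioo 0 (π ^ 2)) : √y ∈ Ioc 0 π :=
    ⟨sqrt_pos.2 hy.1, (sqrt_le_left pi_pos.le).2 hy.2.le⟩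
  have hanti := antitoneOn_sin_div_self (hsqrt hz) (hsqrt hw) (sqrt_le_sqrt hzw)
  simp only at hanti
  linarith

theorem convexOn_arccos_sq : ConvexOn ℝ (Icc (-1) 1) (fun x => arccos x ^ 2) := by
  apply MonotoneOn.convexOn_of_deriv (convex_Icc _ _) (by fun_prop)
  · rw [interior_Icc]
    exact fun x hx => (hasDerivAt_arccos_sq hx).differentiableAt.differentiableWithinAt
  rw [interior_Icc]
  intro x hx y hy hxy
  rw [(hasDerivAt_arccos_sq hx).deriv, (hasDerivAt_arccos_sq hy).deriv]
  have harccos {z : ℝ} (hz : z ∈ Ioo (-1) 1) : arccos z ∈ Ioc 0 π :=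
    ⟨arccos_pos.2 hz.2, arccos_le_pi z⟩
  have hsin_pos {z : ℝ} (hz : z ∈ Ioo (-1) 1) : 0 < sin (arccos z) / arccos z :=
    div_pos (sin_pos_of_pos_of_lt_pi (arccos_pos.2 hz.2) (arccos_lt_pi.2 hz.1)) (harccos hz).1
  have hanti := antitoneOn_sin_div_self (harccos hy) (harccos hx) (arccos_le_arccos hxy)
  have hinv := inv_anti₀ (hsin_pos hx) hanti
  simp only [inv_div] at hinv
  linarith

theorem arccos_cos_mul_cos_sq_le {s t : ℝ} (hs : 0 ≤ s) (ht : 0 ≤ t) (hst : s + t ≤ π) :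
    arccos (cos s * cos t) ^ 2 ≤ s ^ 2 + t ^ 2 := by
  have hcos : cos √(s ^ 2 + t ^ 2) ≤ cos s * cos t := by
    have h := convexOn_cos_sqrt.2 (x := (s - t) ^ 2) (y := (s + t) ^ 2)
      ⟨sq_nonneg _, by nlinarith⟩ ⟨sq_nonneg _, by nlinarith⟩
      (by norm_num : (0 : ℝ) ≤ 1 / 2) (by norm_num : (0 : ℝ) ≤ 1 / 2) (by norm_num)
    simp only [smul_eq_mul, sqrt_sq_eq_abs, cos_abs] at h
    calc cos √(s ^ 2 + t ^ 2) = cos √(1 / 2 * (s - t) ^ 2 + 1 / 2 * (s + t) ^ 2) := by ring_nf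
      _ ≤ 1 / 2 * cos (s - t) + 1 / 2 * cos (s + t) := h
      _ = cos s * cos t := by rw [cos_sub, cos_add]; ring
  have hr : √(s ^ 2 + t ^ 2) ≤ π := (sqrt_le_left pi_pos.le).2 (by nlinarith)
  calc arccos (cos s * cos t) ^ 2 ≤ √(s ^ 2 + t ^ 2) ^ 2 := by
        gcongr
        · exact arccos_nonneg _
        calc arccos (cos s * cos t) ≤ arccos (cos √(s ^ 2 + t ^ 2)) := arccos_le_arccos hcos
          _ = √(s ^ 2 + t ^ 2) := arccos_cos (sqrt_nonneg _) hr
    _ = s ^ 2 + t ^ 2 := sq_sqrt (by positivity)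

theorem ConvexOn.le_bilinear_interpolation {E : Type*} [AddCommGroup E] [Module ℝ E] {s : Set E}
    {f : E → ℝ} (hf : ConvexOn ℝ s f) {x y : E} (h0 : 0 ∈ s) (hx : x ∈ s) (hy : y ∈ s)
    (hxy : x + y ∈ s) {u v : ℝ} (hu : u ∈ Icc 0 1) (hv : v ∈ Icc 0 1) :
    f (u • x + v • y) ≤
      u * v * f (x + y) + u * (1 - v) * f x + (1 - u) * v * f y + (1 - u) * (1 - v) * f 0 := by
  obtain ⟨hu0, hu1⟩ := hu
  obtain ⟨hv0, hv1⟩ := hv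
  have hu' : 0 ≤ 1 - u := sub_nonneg.2 hu1
  have hv' : 0 ≤ 1 - v := sub_nonneg.2 hv1
  have ex : v • (x + y) + (1 - v) • x = x + v • y := by module
  have ey : v • y + (1 - v) • (0 : E) = v • y := by module
  have hmx : x + v • y ∈ s := ex ▸ hf.1 hxy hx hv0 hv' (by ring)
  have hmy : v • y ∈ s := ey ▸ hf.1 hy h0 hv0 hv' (by ring)
  have hfx : f (x + v • y) ≤ v * f (x + y) + (1 - v) * f x := ex ▸ hf.2 hxy hx hv0 hv' (by ring)
  have hfy : f (v • y) ≤ v * f y + (1 - v) * f 0 := ey ▸ hf.2 hy h0 hv0 hv' (by ring)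
  calc f (u • x + v • y) = f (u • (x + v • y) + (1 - u) • (v • y)) := by congr 1; module
    _ ≤ u * f (x + v • y) + (1 - u) * f (v • y) := hf.2 hmx hmy hu0 hu' (by ring)
    _ ≤ u * (v * f (x + y) + (1 - v) * f x) + (1 - u) * (v * f y + (1 - v) * f 0) := by gcongr
    _ = _ := by ring

theorem cos_sub_cos_le_abs_sq_sub_sq (x y : ℝ) : cos x - cos y ≤ |y ^ 2 - x ^ 2| / 2 := by
  calc cos x - cos y = -2 * (sin ((x + y) / 2) * sin ((x - y) / 2)) := by rw [cos_sub_cos]; ring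
    _ ≤ 2 * (|sin ((x + y) / 2)| * |sin ((x - y) / 2)|) := by
        rw [← abs_mul]; linarith [neg_abs_le (sin ((x + y) / 2) * sin ((x - y) / 2))]
    _ ≤ 2 * (|(x + y) / 2| * |(x - y) / 2|) := by
        gcongr 2 * (?_ * ?_) <;> exact abs_sin_le_abs
    _ = |y ^ 2 - x ^ 2| / 2 := by
        rw [← abs_mul, abs_sub_comm, show x ^ 2 - y ^ 2 = 4 * ((x + y) / 2 * ((x - y) / 2)) by ring,
          abs_mul 4, abs_of_pos (four_pos : (0 : ℝ) < 4)]
        ring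

theorem two_mul_sub_le_arccos_sq_sub_arccos_sq {x y : ℝ} (hx : -1 ≤ x) (hxy : x ≤ y) (hy : y ≤ 1) :
    2 * (y - x) ≤ arccos x ^ 2 - arccos y ^ 2 := by
  have h := cos_sub_cos_le_abs_sq_sub_sq (arccos y) (arccos x)
  have hsq : arccos y ^ 2 ≤ arccos x ^ 2 :=
    pow_le_pow_left₀ (arccos_nonneg y) (arccos_le_arccos hxy) 2
  rw [cos_arccos (hx.trans hxy) hy, cos_arccos hx (hxy.trans hy), abs_of_nonneg (sub_nonneg.2 hsq)]
    at h
  linarith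

theorem mul_div_pi_sq_le_sin_half_mul_sin_half {θ φ : ℝ} (hθ : θ ∈ Icc 0 π) (hφ : φ ∈ Icc 0 π) :
    θ * φ / π ^ 2 ≤ sin (θ / 2) * sin (φ / 2) := by
  have hθ' : 0 ≤ 2 / π * (θ / 2) := by have := hθ.1; positivity
  have hφ' : 0 ≤ 2 / π * (φ / 2) := by have := hφ.1; positivity
  have h1 := mul_le_sin (x := θ / 2) (by linarith [hθ.1]) (by linarith [hθ.2])
  have h2 := mul_le_sin (x := φ / 2) (by linarith [hφ.1]) (by linarith [hφ.2])
  calc θ * φ / π ^ 2 = 2 / π * (θ / 2) * (2 / π * (φ / 2)) := by field_simp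
    _ ≤ sin (θ / 2) * sin (φ / 2) := mul_le_mul h1 h2 hφ' (hθ'.trans h1)

theorem mul_div_pi_sq_le_cos_half_mul_cos_half {θ φ : ℝ} (hθ : θ ∈ Icc 0 π) (hφ : φ ∈ Icc 0 π) :
    (π - θ) * (π - φ) / π ^ 2 ≤ cos (θ / 2) * cos (φ / 2) := by
  have h := mul_div_pi_sq_le_sin_half_mul_sin_half (θ := π - θ) (φ := π - φ)
    ⟨by linarith [hθ.2], by linarith [hθ.1]⟩ ⟨by linarith [hφ.2], by linarith [hφ.1]⟩
  rwa [sub_div, sub_div, sin_pi_div_two_sub, sin_pi_div_two_sub] at h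

theorem arccos_sin_half_mul_add_cos_half_mul_sq {θ φ : ℝ} (hθ : θ ∈ Icc 0 π) (hφ : φ ∈ Icc 0 π) :
    arccos (sin (θ / 2) * sin (φ / 2) + cos (θ / 2) * cos (φ / 2)) ^ 2 = ((θ - φ) / 2) ^ 2 := by
  have habs : |(θ - φ) / 2| ≤ π :=
    abs_le.2 ⟨by linarith [hθ.1, hφ.2, pi_pos], by linarith [hθ.2, hφ.1, pi_pos]⟩
  rw [add_comm, ← cos_sub, ← sub_div, ← cos_abs, arccos_cos (abs_nonneg _) habs, sq_abs]

theorem sin_half_mul_sin_half_nonneg {θ φ : ℝ} (hθ : θ ∈ Icc 0 π) (hφ : φ ∈ Icc 0 π) :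
    0 ≤ sin (θ / 2) * sin (φ / 2) :=
  (mul_div_pi_sq_le_sin_half_mul_sin_half hθ hφ).trans' (by have := hθ.1; have := hφ.1; positivity)

theorem cos_half_mul_cos_half_nonneg {θ φ : ℝ} (hθ : θ ∈ Icc 0 π) (hφ : φ ∈ Icc 0 π) :
    0 ≤ cos (θ / 2) * cos (φ / 2) :=
  (mul_div_pi_sq_le_cos_half_mul_cos_half hθ hφ).trans'
    (div_nonneg (mul_nonneg (sub_nonneg.2 hθ.2) (sub_nonneg.2 hφ.2)) (sq_nonneg π))

theorem sin_half_mul_add_cos_half_mul_le_one (θ φ : ℝ) :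
    sin (θ / 2) * sin (φ / 2) + cos (θ / 2) * cos (φ / 2) ≤ 1 := by
  rw [add_comm, ← cos_sub]
  exact cos_le_one _

theorem Ffun_eq_arccos_sq (θ φ u v : ℝ) :
    Ffun θ φ u v =
      arccos (u * (sin (θ / 2) * sin (φ / 2)) + v * (cos (θ / 2) * cos (φ / 2))) ^ 2 := by
  rw [Ffun]; ring_nf

theorem two_div_pi_sq_mul_le_Ffun_sub_Ffun_one_one {θ φ u v : ℝ} (hθ : θ ∈ Icc 0 π)
    (hφ : φ ∈ Icc 0 π) (hu : u ∈ Icc (-1) 1) (hv : v ∈ Icc (-1) 1) :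
    2 / π ^ 2 * (θ * φ * (1 - u) + (π - θ) * (π - φ) * (1 - v)) ≤ Ffun θ φ u v - Ffun θ φ 1 1 := by
  have ha := mul_div_pi_sq_le_sin_half_mul_sin_half hθ hφ
  have hb := mul_div_pi_sq_le_cos_half_mul_cos_half hθ hφ
  have ha0 := sin_half_mul_sin_half_nonneg hθ hφ
  have hb0 := cos_half_mul_cos_half_nonneg hθ hφ
  have hab := sin_half_mul_add_cos_half_mul_le_one θ φ
  rw [Ffun_eq_arccos_sq, Ffun_eq_arccos_sq, one_mul, one_mul,
    arccos_sin_half_mul_add_cos_half_mul_sq hθ hφ]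
  set a := sin (θ / 2) * sin (φ / 2)
  set b := cos (θ / 2) * cos (φ / 2)
  have key := two_mul_sub_le_arccos_sq_sub_arccos_sq (x := u * a + v * b) (y := a + b)
    (by nlinarith [hu.1, hv.1]) (by nlinarith [hu.2, hv.2]) hab
  rw [arccos_sin_half_mul_add_cos_half_mul_sq hθ hφ] at key
  calc 2 / π ^ 2 * (θ * φ * (1 - u) + (π - θ) * (π - φ) * (1 - v))
      = 2 * (θ * φ / π ^ 2 * (1 - u) + (π - θ) * (π - φ) / π ^ 2 * (1 - v)) := by ring
    _ ≤ 2 * (a * (1 - u) + b * (1 - v)) := by gcongr <;> linarith [hu.2, hv.2]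
    _ = 2 * (a + b - (u * a + v * b)) := by ring
    _ ≤ _ := key

theorem Ffun_sub_Ffun_one_one_le_one_half_mul {θ φ u v : ℝ} (hθ : θ ∈ Icc 0 π)
    (hφ : φ ∈ Icc 0 π) (hu : u ∈ Icc 0 1) (hv : v ∈ Icc 0 1) :
    Ffun θ φ u v - Ffun θ φ 1 1 ≤ 1 / 2 * (θ * φ * (1 - u) + (π - θ) * (π - φ) * (1 - v)) := by
  have ha0 := sin_half_mul_sin_half_nonneg hθ hφ
  have hb0 := cos_half_mul_cos_half_nonneg hθ hφ
  have hab := sin_half_mul_add_cos_half_mul_le_one θ φ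
  have hcorner_a : arccos (sin (θ / 2) * sin (φ / 2)) ^ 2 ≤
      ((θ - φ) / 2) ^ 2 + (π - θ) * (π - φ) / 2 := by
    have h := arccos_cos_mul_cos_sq_le (s := (π - θ) / 2) (t := (π - φ) / 2)
      (by linarith [hθ.2]) (by linarith [hφ.2]) (by linarith [hθ.1, hφ.1])
    rw [sub_div, sub_div, cos_pi_div_two_sub, cos_pi_div_two_sub] at h
    linarith
  have hcorner_b : arccos (cos (θ / 2) * cos (φ / 2)) ^ 2 ≤ ((θ - φ) / 2) ^ 2 + θ * φ / 2 := by
    have h := arccos_cos_mul_cos_sq_le (s := θ / 2) (t := φ / 2)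
      (by linarith [hθ.1]) (by linarith [hφ.1]) (by linarith [hθ.2, hφ.2])
    linarith
  have hcorner_0 : arccos 0 ^ 2 ≤ ((θ - φ) / 2) ^ 2 + θ * φ / 2 + (π - θ) * (π - φ) / 2 := by
    rw [arccos_zero]
    nlinarith [sq_nonneg (θ + φ - π)]
  have hmem {x : ℝ} (h0 : 0 ≤ x) (h1 : x ≤ 1) : x ∈ Icc (-1 : ℝ) 1 := ⟨by linarith, h1⟩
  have h := convexOn_arccos_sq.le_bilinear_interpolation (hmem le_rfl zero_le_one)
    (hmem ha0 (by linarith)) (hmem hb0 (by linarith)) (hmem (by linarith) hab) hu hv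
  simp only [smul_eq_mul, arccos_sin_half_mul_add_cos_half_mul_sq hθ hφ] at h
  rw [Ffun_eq_arccos_sq, Ffun_eq_arccos_sq, one_mul, one_mul,
    arccos_sin_half_mul_add_cos_half_mul_sq hθ hφ, sub_le_iff_le_add']
  have hu0 : 0 ≤ u := hu.1
  have hv0 : 0 ≤ v := hv.1
  have hu1 : 0 ≤ 1 - u := sub_nonneg.2 hu.2
  have hv1 : 0 ≤ 1 - v := sub_nonneg.2 hv.2
  calc _ ≤ _ := h
    _ ≤ u * v * ((θ - φ) / 2) ^ 2 + u * (1 - v) * (((θ - φ) / 2) ^ 2 + (π - θ) * (π - φ) / 2)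
        + (1 - u) * v * (((θ - φ) / 2) ^ 2 + θ * φ / 2)
        + (1 - u) * (1 - v) * (((θ - φ) / 2) ^ 2 + θ * φ / 2 + (π - θ) * (π - φ) / 2) := by
      gcongr
    _ = _ := by ring

theorem Ffun_difference_bounds (θ φ : ℝ) (hθ : θ ∈ Set.Icc (0 : ℝ) π)
    (hφ : φ ∈ Set.Icc (0 : ℝ) π) (u v : ℝ) (hu : u ∈ Set.Icc (0 : ℝ) 1)
    (hv : v ∈ Set.Icc (0 : ℝ) 1) :
    2 / π ^ 2 * (θ * φ * (1 - u) + (π - θ) * (π - φ) * (1 - v)) ≤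
      Ffun θ φ u v - Ffun θ φ 1 1 ∧
    Ffun θ φ u v - Ffun θ φ 1 1 ≤
      1 / 2 * (θ * φ * (1 - u) + (π - θ) * (π - φ) * (1 - v)) :=
  ⟨two_div_pi_sq_mul_le_Ffun_sub_Ffun_one_one hθ hφ (Icc_subset_Icc (by norm_num) le_rfl hu)
      (Icc_subset_Icc (by norm_num) le_rfl hv),
    Ffun_sub_Ffun_one_one_le_one_half_mul hθ hφ hu hv⟩
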